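/- In the execution of Algorithm lineon on any request sequence R, the online radius of every request is bounded by the offline radius: for every i ∈ {1,…,N}, ρ^on_i ≤ (4Δ+1)·ρ^T_i. -/

import Mathlib

open Finset

/-! ## The time-line grid of a line network -/

/-- Grid edges of the time-line graph of the line network:
`h v t` is the undirected horizontal edge `{(v,t),(v+1,t)}`,
`a v t` is the arc `((v,t),(v,t+1))` directed forward in time. -/
inductive GEdge : Type
  | h (v t : ℕ) : GEdge
  | a (v t : ℕ) : GEdge
deriving DecidableEq

/-- Distance between two nodes of the line network. -/
def natdist (a b : ℕ) : ℕ := max a b - min a b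

/-- The (replica) endpoints of a grid edge. -/
def eVerts : GEdge → Finset (ℕ × ℕ)
  | .h v t => {(v, t), (v + 1, t)}
  | .a v t => {(v, t), (v, t + 1)}

/-- The replicas that are endpoints of edges of `F`. -/
def verts (F : Finset GEdge) : Finset (ℕ × ℕ) := F.biUnion eVerts

/-- The edge lies inside the grid of the line network `L(n)` (nodes `1,…,n`). -/
def eInGrid (n : ℕ) : GEdge → Prop
  | .h v _ => 1 ≤ v ∧ v + 1 ≤ n
  | .a v _ => 1 ≤ v ∧ v ≤ n

/-- The distance `d((u,s),(v,t)) = (t-s) + |v-u|` if `s ≤ t`, and `∞` otherwise. -/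
def gdist (p q : ℕ × ℕ) : WithTop ℕ :=
  if p.2 ≤ q.2 then ((q.2 - p.2 + natdist p.1 q.1 : ℕ) : WithTop ℕ) else ⊤

/-- One step of a path in a solution: horizontal edges may be traversed in both
directions, arcs only forward in time. -/
inductive GStep (F : Finset GEdge) : ℕ × ℕ → ℕ × ℕ → Prop
  | right {v t : ℕ} : GEdge.h v t ∈ F → GStep F (v, t) (v + 1, t)
  | left {v t : ℕ} : GEdge.h v t ∈ F → GStep F (v + 1, t) (v, t)
  | up {v t : ℕ} : GEdge.a v t ∈ F → GStep F (v, t) (v, t + 1)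

/-- `q` is reachable from `p` in the edge set `F`. -/
def Reaches (F : Finset GEdge) (p q : ℕ × ℕ) : Prop := Relation.ReflTransGen (GStep F) p q

/-- A feasible MCD solution: a set of grid edges spanning all requests from the
origin replica `(r0, 0)`. -/
def Feasible (n r0 : ℕ) (R : List (ℕ × ℕ)) (F : Finset GEdge) : Prop :=
  (∀ e ∈ F, eInGrid n e) ∧ ∀ r ∈ R, Reaches F (r0, 0) r

/-- `|OPT|`, the cost of a minimum-cost feasible solution. -/
noncomputable def optCost (n r0 : ℕ) (R : List (ℕ × ℕ)) : ℕ :=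
  sInf {c : ℕ | ∃ F : Finset GEdge, Feasible n r0 R F ∧ F.card = c}

/-- A valid MCD instance on `L(n)`: the origin and all requested nodes are in
`{1,…,n}` and the request times are nondecreasing. -/
def ValidInstance (n r0 : ℕ) (R : List (ℕ × ℕ)) : Prop :=
  1 ≤ r0 ∧ r0 ≤ n ∧ (∀ r ∈ R, 1 ≤ r.1 ∧ r.1 ≤ n) ∧ List.Chain' (· ≤ ·) (R.map Prod.snd)

/-- The time `t_N` of the last request. -/
def lastT (R : List (ℕ × ℕ)) : ℕ := (R.map Prod.snd).foldr max 0

/-! ## The offline algorithm Triangle of Charikar, Halperin and Motwani -/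

/-- The `i`-th request (junk value `(0,0)` out of range). -/
def req (R : List (ℕ × ℕ)) (i : ℕ) : ℕ × ℕ := R.getD i (0, 0)

/-- The radius `ρ^T_i = d(q_i, r_i)` of the `i`-th request, where `q_i = serve i`
is its serving replica. -/
def triRho (R : List (ℕ × ℕ)) (serve : ℕ → ℕ × ℕ) (i : ℕ) : ℕ :=
  ((req R i).2 - (serve i).2) + natdist (serve i).1 (req R i).1

/-- `Base(i)`: the replicas `(v, t_i)` with `|v - v_i| ≤ ρ^T_i`. -/
def triBase (n : ℕ) (R : List (ℕ × ℕ)) (serve : ℕ → ℕ × ℕ) (i : ℕ) : Finset (ℕ × ℕ) :=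
  ((Finset.Icc 1 n).filter fun v => natdist v (req R i).1 ≤ triRho R serve i).image
    fun v => (v, (req R i).2)

/-- `Base_H(i)`: the horizontal edges joining consecutive replicas of `Base(i)`. -/
def triBaseH (n : ℕ) (R : List (ℕ × ℕ)) (serve : ℕ → ℕ × ℕ) (i : ℕ) : Finset GEdge :=
  ((Finset.Icc 1 n).filter fun v =>
      v + 1 ≤ n ∧ natdist v (req R i).1 ≤ triRho R serve i ∧
        natdist (v + 1) (req R i).1 ≤ triRho R serve i).image
    fun v => GEdge.h v (req R i).2

/-- The arcs of the vertical path from the serving replica `(u_i, s_i)` to `(u_i, t_i)`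
added at step (T3). -/
def triAddA (R : List (ℕ × ℕ)) (serve : ℕ → ℕ × ℕ) (i : ℕ) : Finset GEdge :=
  (Finset.Ico (serve i).2 (req R i).2).image fun τ => GEdge.a (serve i).1 τ

/-- Triangle's solution after handling the first `i` requests. -/
def triSol (R : List (ℕ × ℕ)) (serve : ℕ → ℕ × ℕ) (addH : ℕ → Finset GEdge)
    (i : ℕ) : Finset GEdge :=
  (Finset.range i).biUnion fun j => triAddA R serve j ∪ addH j

/-- The replicas of Triangle's solution after handling the first `i` requests
(initially only the origin replica `(r0,0)`). -/
def triReps (r0 : ℕ) (R : List (ℕ × ℕ)) (serve : ℕ → ℕ × ℕ) (addH : ℕ → Finset GEdge)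
    (i : ℕ) : Finset (ℕ × ℕ) :=
  insert (r0, 0) (verts (triSol R serve addH i))

/-- An execution of Algorithm Triangle on the instance `(n, r0, R)`:
`serve i` is the serving replica `q_i = (u_i, s_i)` of request `r_i` (step (T1)),
chosen in the current solution at minimum distance from `r_i`;
`addH i` is the set of horizontal edges added at step (T4), namely all of
`Base_H(i)` except possibly one edge (the one closing a cycle). -/
structure TriangleExec (n r0 : ℕ) (R : List (ℕ × ℕ)) where
  serve : ℕ → ℕ × ℕ
  addH : ℕ → Finset GEdge
  serve_mem : ∀ i < R.length, serve i ∈ triReps r0 R serve addH i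
  serve_time : ∀ i < R.length, (serve i).2 ≤ (req R i).2
  serve_min : ∀ i < R.length, ∀ q ∈ triReps r0 R serve addH i,
      gdist (serve i) (req R i) ≤ gdist q (req R i)
  addH_spec : ∀ i < R.length, ∃ E : Finset GEdge,
      E.card ≤ 1 ∧ addH i = triBaseH n R serve i \ E
  base_conn : ∀ i < R.length, ∀ p ∈ triBase n R serve i,
      Reaches (triSol R serve addH (i + 1)) (r0, 0) p
  addH_tail : ∀ i, R.length ≤ i → addH i = ∅

/-- `H^T`: the horizontal edges of Triangle's final solution. -/
def triHT (R : List (ℕ × ℕ)) (addH : ℕ → Finset GEdge) : Finset GEdge :=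
  (Finset.range R.length).biUnion addH

/-- `A^T`: the arcs of Triangle's final solution. -/
def triAT (R : List (ℕ × ℕ)) (serve : ℕ → ℕ × ℕ) : Finset GEdge :=
  (Finset.range R.length).biUnion (triAddA R serve)

/-- `Base = ∪ᵢ Base(i)`: all base replicas. -/
def triBaseAll (n : ℕ) (R : List (ℕ × ℕ)) (serve : ℕ → ℕ × ℕ) : Finset (ℕ × ℕ) :=
  (Finset.range R.length).biUnion (triBase n R serve)

/-! ## Algorithm lineon -/

/-- An interval of the hierarchical partition, encoded as `(level, index)`:
`(l, j)` denotes `I^l_j = {Δ(j-1)·2^l + 1, …, Δ·j·2^l}`. -/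
abbrev Ivl := ℕ × ℕ

/-- The nodes of the interval `I = (l, j)`. -/
def ivlNodes (Δ : ℕ) (I : Ivl) : Finset ℕ :=
  Finset.Icc (Δ * (I.2 - 1) * 2 ^ I.1 + 1) (Δ * I.2 * 2 ^ I.1)

/-- `I = (l, j)` is a genuine interval of the partition of `{1,…,n}`,
where `n = Δ · 2^k`: its level is at most `log₂ m = k` and
`1 ≤ j ≤ m / 2^l = 2^(k-l)`. -/
def validIvl (Δ k : ℕ) (I : Ivl) : Prop :=
  I.1 ≤ k ∧ 1 ≤ I.2 ∧ I.2 ≤ 2 ^ (k - I.1)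

/-- The nodes of the neighborhood `N(I) = NL(I) ∪ I ∪ NR(I)` of interval `I`. -/
def nbhdNodes (n Δ : ℕ) (I : Ivl) : Finset ℕ :=
  Finset.Icc (Δ * (I.2 - 2) * 2 ^ I.1 + 1) (min n (Δ * (I.2 + 1) * 2 ^ I.1))

/-- The nodes having a base replica at time `t` (`Base[t]`, as nodes). -/
def baseNodesAt (n : ℕ) (R : List (ℕ × ℕ)) (serve : ℕ → ℕ × ℕ) (t : ℕ) : Finset ℕ :=
  ((triBaseAll n R serve).filter fun p => p.2 = t).image Prod.fst

/-- `I` is active at time `t`: `Base ∩ I[t - 2^{l(I)}, t] ≠ ∅`. -/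
def activeAt (n Δ : ℕ) (R : List (ℕ × ℕ)) (serve : ℕ → ℕ × ℕ) (I : Ivl) (t : ℕ) : Prop :=
  ∃ p ∈ triBaseAll n R serve, p.1 ∈ ivlNodes Δ I ∧ p.2 ≤ t ∧ t ≤ p.2 + 2 ^ I.1

/-- `I` is stay-active at time `t`: `Base ∩ I[t - 2^{l(I)} + 1, t] ≠ ∅`. -/
def stayActiveAt (n Δ : ℕ) (R : List (ℕ × ℕ)) (serve : ℕ → ℕ × ℕ) (I : Ivl) (t : ℕ) : Prop :=
  ∃ p ∈ triBaseAll n R serve, p.1 ∈ ivlNodes Δ I ∧ p.2 ≤ t ∧ t < p.2 + 2 ^ I.1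

/-- `C_t`: the nodes storing a copy at time `t`.  `C_0 = {r0}`, and `C_{t+1}`
consists of the origin together with the nodes selected (by `sel`) for the
commitments made at time `t` (listed, in processing order, in `commitList t`). -/
def lineC (r0 : ℕ) (commitList : ℕ → List Ivl) (sel : ℕ → Ivl → ℕ) : ℕ → Finset ℕ
  | 0 => {r0}
  | t + 1 => insert r0 ((commitList t).map (sel t)).toFinset

/-- The nodes to which the delivery phase for request `r_j` delivers a copy:
the horizontal path from `q^on_j` to `r_j` together with the nodes of `Base(j)`. -/
def servedNodes (n : ℕ) (R : List (ℕ × ℕ)) (serve : ℕ → ℕ × ℕ) (qon : ℕ → ℕ)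
    (j : ℕ) : Finset ℕ :=
  Finset.Icc (min (qon j) (req R j).1) (max (qon j) (req R j).1) ∪
    (triBase n R serve j).image Prod.fst

/-- The nodes whose time-`t_i` replica is in lineon's solution when request `r_i`
arrives: the caches `C_{t_i}` together with everything delivered for earlier
requests of the same time. -/
def availNodes (n r0 : ℕ) (R : List (ℕ × ℕ)) (serve : ℕ → ℕ × ℕ)
    (commitList : ℕ → List Ivl) (sel : ℕ → Ivl → ℕ) (qon : ℕ → ℕ) (i : ℕ) : Finset ℕ :=
  lineC r0 commitList sel (req R i).2 ∪
    (Finset.range i).biUnion fun j =>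
      if (req R j).2 = (req R i).2 then servedNodes n R serve qon j else ∅

/-- An execution of Algorithm lineon with parameter `Δ` (where `n = Δ · 2^k`) on the
instance `(n, r0, R)`.  It simulates Triangle (`tri`); `commitList t` is the list of
intervals committing at time `t`, in the order processed by the storage phase
(levels in increasing order); `sel t I` is the node selected for the commitment
`⟨I,t⟩` in step (S1.2); `qon i` is the node of the serving replica `q^on_i` of
request `r_i` chosen in the delivery phase (step (D1)). -/
structure LineonExec (n Δ k r0 : ℕ) (R : List (ℕ × ℕ)) where
  tri : TriangleExec n r0 R
  hn : n = Δ * 2 ^ k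
  commitList : ℕ → List Ivl
  sel : ℕ → Ivl → ℕ
  qon : ℕ → ℕ
  commit_valid : ∀ t, ∀ I ∈ commitList t, validIvl Δ k I
  commit_nodup : ∀ t, (commitList t).Nodup
  commit_sorted : ∀ t, ((commitList t).map Prod.fst).Pairwise (· ≤ ·)
  commit_stay : ∀ t, ∀ I ∈ commitList t, stayActiveAt n Δ R tri.serve I t
  commit_fresh : ∀ t l₁ I l₂, commitList t = l₁ ++ I :: l₂ →
      ∀ v ∈ nbhdNodes n Δ I, v ≠ r0 ∧ v ∉ l₁.map (sel t)
  commit_tail : ∀ t, lastT R < t → commitList t = []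
  sel_nbhd : ∀ t, ∀ I ∈ commitList t, sel t I ∈ nbhdNodes n Δ I
  sel_src : ∀ t, ∀ I ∈ commitList t,
      sel t I ∈ baseNodesAt n R tri.serve t ∨ sel t I ∈ lineC r0 commitList sel t
  loop_done : ∀ t ≤ lastT R, ∀ I, validIvl Δ k I → stayActiveAt n Δ R tri.serve I t →
      ∃ v ∈ nbhdNodes n Δ I, v ∈ lineC r0 commitList sel (t + 1)
  qon_mem : ∀ i < R.length, qon i ∈ availNodes n r0 R tri.serve commitList sel qon i
  qon_min : ∀ i < R.length, ∀ w ∈ availNodes n r0 R tri.serve commitList sel qon i,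
      natdist (qon i) (req R i).1 ≤ natdist w (req R i).1

/-- The online radius `ρ^on_i = d(q^on_i, r_i)`. -/
def lineRon (R : List (ℕ × ℕ)) (qon : ℕ → ℕ) (i : ℕ) : ℕ := natdist (qon i) (req R i).1

/-- `H^on`: the horizontal edges of lineon's final solution. -/
def lineHon (n : ℕ) (R : List (ℕ × ℕ)) (serve : ℕ → ℕ × ℕ) (qon : ℕ → ℕ) : Finset GEdge :=
  (Finset.range R.length).biUnion fun i =>
    (Finset.Ico (min (qon i) (req R i).1) (max (qon i) (req R i).1)).image
        (fun v => GEdge.h v (req R i).2) ∪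
      triBaseH n R serve i

/-- `A^on`: the arcs of lineon's final solution, i.e. the arcs `((v,t),(v,t+1))`
with `(v,t+1) ∈ C_{t+1}`. -/
def lineAon (r0 : ℕ) (R : List (ℕ × ℕ)) (commitList : ℕ → List Ivl)
    (sel : ℕ → Ivl → ℕ) : Finset GEdge :=
  (Finset.range (lastT R)).biUnion fun t =>
    (lineC r0 commitList sel (t + 1)).image fun v => GEdge.a v t

/-- `COMMIT`, as a finite set of pairs `⟨I, t⟩`. -/
def commitSet (R : List (ℕ × ℕ)) (commitList : ℕ → List Ivl) : Finset (Ivl × ℕ) :=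
  (Finset.range (lastT R + 1)).biUnion fun t =>
    (commitList t).toFinset.image fun I => (I, t)


/-! ## Auxiliary lemmas -/

lemma natdist_triangle' (a b c : ℕ) : natdist a c ≤ natdist a b + natdist b c := by
  simp only [natdist]; omega

lemma nbhd_dist_helper {X Q u v : ℕ}
    (hu_lo : X + 1 ≤ u) (hu_hi : u ≤ X + Q)
    (hv_lo : X + 1 ≤ v + Q) (hv_hi : v ≤ X + 2 * Q) :
    natdist v u + 1 ≤ 2 * Q := by
  simp only [natdist]; omega

lemma sub_one_mul_bound (Q m : ℕ) : Q * m ≤ Q * (m - 1) + Q := by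
  cases m with
  | zero => simp
  | succ m' => rw [Nat.add_sub_cancel, Nat.mul_succ]

lemma le_lastT' : ∀ {R : List (ℕ × ℕ)} {r : ℕ × ℕ}, r ∈ R → r.2 ≤ lastT R := by
  intro R
  induction R with
  | nil => intro r h; cases h
  | cons a l ih =>
    intro r h
    rcases List.mem_cons.mp h with rfl | h
    · simp only [lastT, List.map_cons, List.foldr_cons]
      exact le_max_left _ _
    · refine le_trans (ih h) ?_
      simp only [lastT, List.map_cons, List.foldr_cons]
      exact le_max_right _ _

lemma req_mem {R : List (ℕ × ℕ)} {i : ℕ} (hi : i < R.length) : req R i ∈ R := by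
  unfold req
  rw [List.getD_eq_getElem R (0,0) hi]
  exact List.getElem_mem hi

lemma req_snd_mono {R : List (ℕ × ℕ)} (hc : List.Chain' (· ≤ ·) (R.map Prod.snd))
    {j i : ℕ} (hji : j ≤ i) (hi : i < R.length) : (req R j).2 ≤ (req R i).2 := by
  rcases eq_or_lt_of_le hji with rfl | hlt
  · exact le_refl _
  · have hp := List.isChain_iff_pairwise.mp hc
    have hj : j < (R.map Prod.snd).length := by simp only [List.length_map]; omega
    have hi' : i < (R.map Prod.snd).length := by simp only [List.length_map]; omega
    have h := List.pairwise_iff_getElem.mp hp j i hj hi' hlt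
    unfold req
    rw [List.getD_eq_getElem R (0,0) (by omega), List.getD_eq_getElem R (0,0) hi]
    simpa using h

lemma r0_mem_lineC (r0 : ℕ) (cl : ℕ → List Ivl) (sel : ℕ → Ivl → ℕ) (t : ℕ) :
    r0 ∈ lineC r0 cl sel t := by
  cases t with
  | zero => simp [lineC]
  | succ t => simp [lineC]

lemma triBase_mem {n : ℕ} {R : List (ℕ × ℕ)} {serve : ℕ → ℕ × ℕ} {j u : ℕ}
    (h1 : 1 ≤ u) (h2 : u ≤ n) (h3 : natdist u (req R j).1 ≤ triRho R serve j) :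
    (u, (req R j).2) ∈ triBase n R serve j :=
  Finset.mem_image.mpr ⟨u, Finset.mem_filter.mpr ⟨Finset.mem_Icc.mpr ⟨h1, h2⟩, h3⟩, rfl⟩

lemma triBase_mem_elim {n : ℕ} {R : List (ℕ × ℕ)} {serve : ℕ → ℕ × ℕ} {j : ℕ} {p : ℕ × ℕ}
    (h : p ∈ triBase n R serve j) :
    1 ≤ p.1 ∧ p.1 ≤ n ∧ p.2 = (req R j).2 := by
  obtain ⟨v, hv, rfl⟩ := Finset.mem_image.mp h
  obtain ⟨hIcc, -⟩ := Finset.mem_filter.mp hv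
  obtain ⟨a, b⟩ := Finset.mem_Icc.mp hIcc
  exact ⟨a, b, rfl⟩

/-- Structure of Triangle's serving replica: it is either the origin replica, or
its node carries a base replica of some earlier request, at a time not before
the serving replica's time. -/
lemma serve_struct {n r0 : ℕ} {R : List (ℕ × ℕ)} (hV : ValidInstance n r0 R)
    (T : TriangleExec n r0 R) :
    ∀ i, i < R.length →
      T.serve i = (r0, 0) ∨ ∃ j, j < i ∧
        ((T.serve i).1, (req R j).2) ∈ triBase n R T.serve j ∧
        (T.serve i).2 ≤ (req R j).2 := by
  intro i
  induction i using Nat.strong_induction_on with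
  | _ i ih =>
  intro hi
  have hmem := T.serve_mem i hi
  simp only [triReps] at hmem
  rcases Finset.mem_insert.mp hmem with h | h
  · exact Or.inl h
  · right
    simp only [verts, triSol] at h
    obtain ⟨ed, hed, hv⟩ := Finset.mem_biUnion.mp h
    obtain ⟨j, hj, hedj⟩ := Finset.mem_biUnion.mp hed
    have hj' : j < i := Finset.mem_range.mp hj
    have hjlen : j < R.length := lt_trans hj' hi
    refine ⟨j, hj', ?_⟩
    rcases Finset.mem_union.mp hedj with hA | hH
    · -- arc case
      obtain ⟨τ, hτ, rfl⟩ := Finset.mem_image.mp hA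
      obtain ⟨hτ1, hτ2⟩ := Finset.mem_Ico.mp hτ
      have hrange : 1 ≤ (T.serve j).1 ∧ (T.serve j).1 ≤ n := by
        rcases ih j hj' hjlen with h0 | ⟨j', _, hb, _⟩
        · rw [h0]; exact ⟨hV.1, hV.2.1⟩
        · have := triBase_mem_elim hb
          exact ⟨this.1, this.2.1⟩
      have hb : ((T.serve j).1, (req R j).2) ∈ triBase n R T.serve j :=
        triBase_mem hrange.1 hrange.2 (Nat.le_add_left _ _)
      simp only [eVerts, Finset.mem_insert, Finset.mem_singleton] at hv
      rcases hv with h1 | h1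
      · exact ⟨by rw [h1]; exact hb, by rw [h1]; exact le_of_lt hτ2⟩
      · exact ⟨by rw [h1]; exact hb, by rw [h1]; exact hτ2⟩
    · -- horizontal edge case
      have hHin : ed ∈ triBaseH n R T.serve j := by
        obtain ⟨E, -, hEq⟩ := T.addH_spec j hjlen
        rw [hEq] at hH
        exact (Finset.mem_sdiff.mp hH).1
      obtain ⟨w, hw, rfl⟩ := Finset.mem_image.mp hHin
      obtain ⟨hwIcc, hw2, hw3, hw4⟩ := Finset.mem_filter.mp hw
      obtain ⟨hw0, hw1⟩ := Finset.mem_Icc.mp hwIcc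
      simp only [eVerts, Finset.mem_insert, Finset.mem_singleton] at hv
      rcases hv with h1 | h1
      · exact ⟨by rw [h1]; exact triBase_mem hw0 hw1 hw3, by rw [h1]⟩
      · exact ⟨by rw [h1]; exact triBase_mem (by omega) hw2 hw4, by rw [h1]⟩

/-- Selecting the level-`l` interval containing a node `u ∈ {1,…,n}`: it is a
valid interval of the partition, and every node of its neighborhood is at
distance less than `2·Δ·2^l` from `u`. -/
lemma interval_select {n Δ k l u : ℕ} (hQ : 0 < Δ * 2 ^ l) (hlk : l ≤ k)
    (hn : Δ * 2 ^ l * 2 ^ (k - l) = n) (hu1 : 1 ≤ u) (hu2 : u ≤ n) :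
    ∃ m : ℕ, validIvl Δ k (l, m + 1) ∧ u ∈ ivlNodes Δ (l, m + 1) ∧
      ∀ v ∈ nbhdNodes n Δ (l, m + 1), natdist v u + 1 ≤ 2 * (Δ * 2 ^ l) := by
  obtain ⟨m, hm⟩ : ∃ m, (u - 1) / (Δ * 2 ^ l) = m := ⟨_, rfl⟩
  have hdm := Nat.div_add_mod (u - 1) (Δ * 2 ^ l)
  rw [hm] at hdm
  have hmod := Nat.mod_lt (u - 1) hQ
  have hu_lo : Δ * 2 ^ l * m + 1 ≤ u := by omega
  have hu_hi : u ≤ Δ * 2 ^ l * m + Δ * 2 ^ l := by omega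
  have hmlt : m < 2 ^ (k - l) := by
    rw [← hm]
    exact Nat.div_lt_of_lt_mul (by omega)
  have hval3 : m + 1 ≤ 2 ^ (k - l) := by omega
  refine ⟨m, ⟨hlk, Nat.le_add_left 1 m, hval3⟩, ?_, ?_⟩
  · show u ∈ Finset.Icc (Δ * (m + 1 - 1) * 2 ^ l + 1) (Δ * (m + 1) * 2 ^ l)
    rw [Finset.mem_Icc]
    have e1 : Δ * (m + 1 - 1) * 2 ^ l = Δ * 2 ^ l * m := by
      rw [Nat.add_sub_cancel]; ring
    have e2 : Δ * (m + 1) * 2 ^ l = Δ * 2 ^ l * m + Δ * 2 ^ l := by ring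
    omega
  · intro v hv
    have hv' : v ∈ Finset.Icc (Δ * (m + 1 - 2) * 2 ^ l + 1)
        (min n (Δ * (m + 1 + 1) * 2 ^ l)) := hv
    rw [Finset.mem_Icc] at hv'
    obtain ⟨hv_lo, hv_hi⟩ := hv'
    have h3 : Δ * (m + 1 - 2) * 2 ^ l = Δ * 2 ^ l * (m - 1) := by
      rw [show m + 1 - 2 = m - 1 by omega]; ring
    have h4 := sub_one_mul_bound (Δ * 2 ^ l) m
    have h5 : Δ * (m + 1 + 1) * 2 ^ l = Δ * 2 ^ l * m + 2 * (Δ * 2 ^ l) := by ring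
    have h6 := le_trans hv_hi (min_le_right n (Δ * (m + 1 + 1) * 2 ^ l))
    refine nbhd_dist_helper hu_lo hu_hi ?_ ?_
    · omega
    · omega

/-- Arithmetic for the main case: combining the neighborhood-distance bound with
`2^l ≤ 2d` and `d + |u - vᵢ| ≤ ρ` gives `|v - vᵢ| ≤ (4Δ+1)ρ`. -/
lemma caseB_bound {Δ l u v vi d ρ : ℕ}
    (hkey : natdist v u + 1 ≤ 2 * (Δ * 2 ^ l))
    (hl2 : 2 ^ l ≤ 2 * d)
    (hda : d + natdist u vi ≤ ρ) :
    natdist v vi ≤ (4 * Δ + 1) * ρ := by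
  have htri := natdist_triangle' v u vi
  have h7 : Δ * 2 ^ l ≤ Δ * (2 * d) := Nat.mul_le_mul le_rfl hl2
  have h8 : 2 * (Δ * (2 * d)) = 4 * Δ * d := by ring
  have h9 : 4 * Δ * d ≤ 4 * Δ * ρ := Nat.mul_le_mul le_rfl (by omega)
  have h10 : (4 * Δ + 1) * ρ = 4 * Δ * ρ + ρ := by ring
  omega

/-- The online radius of every request is bounded by the offline
radius: for every `i`, `ρ^on_i ≤ (4Δ+1)·ρ^T_i`. -/
theorem lineon_online_radius_bound (n Δ k r0 : ℕ) (R : List (ℕ × ℕ))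
    (hV : ValidInstance n r0 R) (hΔ : 1 ≤ Δ) (e : LineonExec n Δ k r0 R)
    (i : ℕ) (hi : i < R.length) :
    lineRon R e.qon i ≤ (4 * Δ + 1) * triRho R e.tri.serve i := by
  unfold lineRon
  rcases serve_struct hV e.tri i hi with hO | ⟨j, hji, hbase, hsle⟩
  · -- Case: the serving replica is the origin `(r0, 0)`, which lineon always caches.
    have hw : r0 ∈ availNodes n r0 R e.tri.serve e.commitList e.sel e.qon i :=
      Finset.mem_union_left _ (r0_mem_lineC _ _ _ _)
    have h1 := e.qon_min i hi r0 hw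
    have h2 : natdist r0 (req R i).1 ≤ triRho R e.tri.serve i := by
      unfold triRho; rw [hO]; exact Nat.le_add_left _ _
    calc natdist (e.qon i) (req R i).1 ≤ natdist r0 (req R i).1 := h1
      _ ≤ triRho R e.tri.serve i := h2
      _ ≤ (4 * Δ + 1) * triRho R e.tri.serve i := Nat.le_mul_of_pos_left _ (by omega)
  · -- Case: the serving node carries a base replica of request `j < i`,
    -- at time `t' = (req R j).2` with `s_i ≤ t' ≤ t_i`.
    have hjlen : j < R.length := lt_trans hji hi
    have hud := triBase_mem_elim hbase
    have hu1 : 1 ≤ (e.tri.serve i).1 := hud.1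
    have hu2 : (e.tri.serve i).1 ≤ n := hud.2.1
    have ht'le : (req R j).2 ≤ (req R i).2 := req_snd_mono hV.2.2.2 (le_of_lt hji) hi
    have hst := e.tri.serve_time i hi
    have hrho : triRho R e.tri.serve i =
        ((req R i).2 - (e.tri.serve i).2) + natdist (e.tri.serve i).1 (req R i).1 := rfl
    rcases eq_or_lt_of_le ht'le with hE | hL
    · -- Subcase: the base replica is at time `t_i`; the delivery phase of request
      -- `j` put a copy on all of `Base(j)`, in particular on the serving node.
      have hmem : (e.tri.serve i).1 ∈
          availNodes n r0 R e.tri.serve e.commitList e.sel e.qon i := by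
        apply Finset.mem_union_right
        apply Finset.mem_biUnion.mpr
        refine ⟨j, Finset.mem_range.mpr hji, ?_⟩
        simp only [hE, if_true]
        unfold servedNodes
        exact Finset.mem_union_right _ (Finset.mem_image.mpr ⟨_, hbase, rfl⟩)
      have h1 := e.qon_min i hi _ hmem
      calc natdist (e.qon i) (req R i).1
          ≤ natdist (e.tri.serve i).1 (req R i).1 := h1
        _ ≤ triRho R e.tri.serve i := by rw [hrho]; exact Nat.le_add_left _ _
        _ ≤ (4 * Δ + 1) * triRho R e.tri.serve i := Nat.le_mul_of_pos_left _ (by omega)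
    · -- Subcase: the base replica is strictly in the past.
      have hd1 : 1 ≤ (req R i).2 - (req R j).2 := by omega
      have hdρ : ((req R i).2 - (req R j).2) + natdist (e.tri.serve i).1 (req R i).1 ≤
          triRho R e.tri.serve i := by rw [hrho]; omega
      by_cases hk2 : (req R i).2 - (req R j).2 ≤ 2 ^ k
      · -- The storage phase kept a copy in the neighborhood of the level-`l`
        -- interval containing the base node, where `2^{l-1} < t_i - t' ≤ 2^l`.
        set l := Nat.clog 2 ((req R i).2 - (req R j).2) with hl_def
        have hl1 : (req R i).2 - (req R j).2 ≤ 2 ^ l := Nat.le_pow_clog one_lt_two _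
        have hl2 : 2 ^ l ≤ 2 * ((req R i).2 - (req R j).2) := by
          rcases eq_or_lt_of_le hd1 with hd | hd
          · have hl0 : l = 0 := by rw [hl_def, ← hd, Nat.clog_one_right]
            rw [hl0]; omega
          · rcases Nat.eq_zero_or_pos l with h0 | h0
            · rw [h0]; omega
            · have h2 := Nat.pow_pred_clog_lt_self one_lt_two hd
              rw [← hl_def, Nat.pred_eq_sub_one] at h2
              have h3 : 2 ^ l = 2 * 2 ^ (l - 1) := by
                conv_lhs => rw [show l = (l - 1) + 1 by omega]
                rw [pow_succ]; ring
              omega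
        have hlk : l ≤ k := by
          have h := Nat.clog_mono_right 2 hk2
          rwa [← hl_def, Nat.clog_pow 2 k one_lt_two] at h
        have hQpos : 0 < Δ * 2 ^ l := Nat.mul_pos (by omega) (pow_pos (by norm_num) l)
        have hn' : Δ * 2 ^ l * 2 ^ (k - l) = n := by
          rw [e.hn, mul_assoc, ← pow_add]
          congr 2
          omega
        obtain ⟨m, hIval, huI, hdist⟩ := interval_select hQpos hlk hn' hu1 hu2
        have hAll : ((e.tri.serve i).1, (req R j).2) ∈ triBaseAll n R e.tri.serve := by
          unfold triBaseAll
          exact Finset.mem_biUnion.mpr ⟨j, Finset.mem_range.mpr hjlen, hbase⟩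
        have hstay : stayActiveAt n Δ R e.tri.serve (l, m + 1) ((req R i).2 - 1) := by
          refine ⟨((e.tri.serve i).1, (req R j).2), hAll, huI, ?_, ?_⟩
          · show (req R j).2 ≤ (req R i).2 - 1
            omega
          · show (req R i).2 - 1 < (req R j).2 + 2 ^ l
            omega
        have hti : (req R i).2 ≤ lastT R := le_lastT' (req_mem hi)
        obtain ⟨v, hvN, hvC⟩ := e.loop_done ((req R i).2 - 1) (by omega) (l, m + 1)
          hIval hstay
        rw [show (req R i).2 - 1 + 1 = (req R i).2 by omega] at hvC
        have hmem : v ∈ availNodes n r0 R e.tri.serve e.commitList e.sel e.qon i :=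
          Finset.mem_union_left _ hvC
        have h1 := e.qon_min i hi v hmem
        exact le_trans h1 (caseB_bound (hdist v hvN) hl2 hdρ)
      · -- Fallback: `t_i - t' > 2^k`, so `ρ^T_i` exceeds the length of the line
        -- and the origin is close enough.
        have hr0m : r0 ∈ availNodes n r0 R e.tri.serve e.commitList e.sel e.qon i :=
          Finset.mem_union_left _ (r0_mem_lineC _ _ _ _)
        have h1 := e.qon_min i hi r0 hr0m
        have hvi := hV.2.2.1 (req R i) (req_mem hi)
        have hr01 := hV.1
        have hr02 := hV.2.1
        have hnd : natdist r0 (req R i).1 ≤ n := by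
          simp only [natdist]; omega
        have hchain : n ≤ Δ * triRho R e.tri.serve i := by
          calc n = Δ * 2 ^ k := e.hn
            _ ≤ Δ * (((req R i).2 - (req R j).2) +
                  natdist (e.tri.serve i).1 (req R i).1) :=
                Nat.mul_le_mul le_rfl (by omega)
            _ ≤ Δ * triRho R e.tri.serve i := Nat.mul_le_mul le_rfl hdρ
        calc natdist (e.qon i) (req R i).1 ≤ natdist r0 (req R i).1 := h1
          _ ≤ n := hnd
          _ ≤ Δ * triRho R e.tri.serve i := hchain
          _ ≤ (4 * Δ + 1) * triRho R e.tri.serve i :=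
              Nat.mul_le_mul (by omega) le_rfl
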